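/- Let p be an odd prime. Then for all u, α ∈ F_p one has Σ_{r=0}^{p-1} s_r(u,α) = (4u + 4α + 1)^{(p-1)/2} in F_p. -/
import Mathlib

open Polynomial Finset

/-- `s_r(u,α) = (-1)^r · Σ_{i ∈ S_r} (-1)^{(r-i)/2} · C(r,i) · C(r-i,(r-i)/2)
· (α-u²)^{(r-i)/2} · (2u)^i` where `S_r` is the set of `0 ≤ i ≤ r` of the same parity as `r`. -/
def sCoef (p r : ℕ) (u α : ZMod p) : ZMod p :=
  (-1) ^ r * ∑ i ∈ (Finset.range (r + 1)).filter (fun i => i % 2 = r % 2),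
    (-1) ^ ((r - i) / 2) * (r.choose i : ZMod p) * ((r - i).choose ((r - i) / 2) : ZMod p) *
      (α - u ^ 2) ^ ((r - i) / 2) * (2 * u) ^ i

lemma cast_ne_zero_of_lt {p n : ℕ} [Fact p.Prime] (h0 : 0 < n) (h : n < p) :
    (n : ZMod p) ≠ 0 := by
  rw [Ne, ZMod.natCast_eq_zero_iff]
  exact fun hd => absurd (Nat.le_of_dvd h0 hd) (by omega)

lemma choose_p_sub_one (p : ℕ) [Fact p.Prime] {i : ℕ} (hi : i ≤ p - 1) :
    (((p - 1).choose i : ℕ) : ZMod p) = (-1) ^ i := by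
  induction i with
  | zero => simp
  | succ n ih =>
    have hp := (Fact.out : p.Prime).two_le
    have key := Nat.choose_succ_right_eq (p - 1) n
    have hcast : (((p-1).choose (n+1) : ℕ) : ZMod p) * ((n+1 : ℕ) : ZMod p)
        = (((p-1).choose n : ℕ) : ZMod p) * ((p - 1 - n : ℕ) : ZMod p) := by
      exact_mod_cast congrArg (Nat.cast : ℕ → ZMod p) key
    have h1 : ((p - 1 - n : ℕ) : ZMod p) = -((n+1 : ℕ) : ZMod p) := by
      have : p - 1 - n = p - (n+1) := by omega
      rw [this, Nat.cast_sub (by omega), ZMod.natCast_self]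
      ring
    have hne : ((n+1 : ℕ) : ZMod p) ≠ 0 := cast_ne_zero_of_lt (by omega) (by omega)
    have ihn := ih (by omega)
    apply mul_right_cancel₀ hne
    rw [hcast, h1, ihn]
    ring

lemma central_binom_eq (p : ℕ) [Fact p.Prime] (hodd : Odd p) {n : ℕ}
    (hn : n ≤ (p - 1) / 2) :
    (((2 * n).choose n : ℕ) : ZMod p) = (-4) ^ n * (((p-1)/2).choose n : ℕ) := by
  set m := (p - 1) / 2 with hm
  have hp := (Fact.out : p.Prime).two_le
  have h2m : 2 * m = p - 1 := by
    obtain ⟨k, hk⟩ := hodd; omega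
  have hM : (2 : ZMod p) * ((m : ℕ) : ZMod p) = -1 := by
    have : ((2 * m : ℕ) : ZMod p) = ((p - 1 : ℕ) : ZMod p) := by rw [h2m]
    push_cast at this
    rw [Nat.cast_sub (by omega), ZMod.natCast_self] at this
    rw [this]; push_cast; ring
  induction n with
  | zero => simp
  | succ n ih =>
    have ihn := ih (by omega)
    have hne : ((n+1 : ℕ) : ZMod p) ≠ 0 := cast_ne_zero_of_lt (by omega) (by omega)
    have A := Nat.add_one_mul_choose_eq (2*n+1) n
    have B := Nat.add_one_mul_choose_eq (2*n) n
    have Csym : (2*n+1).choose (n+1) = (2*n+1).choose n := by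
      have := Nat.choose_symm (n := 2*n+1) (k := n+1) (by omega)
      simpa [show 2*n+1 - (n+1) = n by omega] using this.symm
    rw [Csym] at B
    have D := Nat.choose_succ_right_eq m n
    have hDc : ((m.choose (n+1) : ℕ) : ZMod p) * ((n+1:ℕ) : ZMod p)
        = ((m.choose n : ℕ) : ZMod p) * (((m:ℕ) : ZMod p) - ((n:ℕ) : ZMod p)) := by
      have := congrArg (Nat.cast : ℕ → ZMod p) D
      push_cast [Nat.cast_sub (show n ≤ m by omega)] at this
      push_cast
      linear_combination this
    have hAc : ((2*n+2 : ℕ) : ZMod p) * (((2*n+1).choose n : ℕ) : ZMod p)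
        = (((2*n+2).choose (n+1) : ℕ) : ZMod p) * ((n+1:ℕ) : ZMod p) := by
      exact_mod_cast congrArg (Nat.cast : ℕ → ZMod p) A
    have hBc : ((2*n+1 : ℕ) : ZMod p) * (((2*n).choose n : ℕ) : ZMod p)
        = (((2*n+1).choose n : ℕ) : ZMod p) * ((n+1:ℕ) : ZMod p) := by
      exact_mod_cast congrArg (Nat.cast : ℕ → ZMod p) B
    apply mul_right_cancel₀ hne
    apply mul_right_cancel₀ hne
    have e1 : (((2*(n+1)).choose (n+1) : ℕ) : ZMod p) * ((n+1:ℕ):ZMod p) * ((n+1:ℕ):ZMod p)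
        = ((2*n+2 : ℕ) : ZMod p) * ((2*n+1 : ℕ) : ZMod p) * (((2*n).choose n : ℕ) : ZMod p) := by
      have : 2*(n+1) = 2*n+2 := by ring
      rw [this, ← hAc]
      calc ((2*n+2 : ℕ) : ZMod p) * (((2*n+1).choose n : ℕ) : ZMod p) * ((n+1:ℕ):ZMod p)
          = ((2*n+2 : ℕ) : ZMod p) * ((((2*n+1).choose n : ℕ) : ZMod p) * ((n+1:ℕ):ZMod p)) := by
            ring
        _ = ((2*n+2 : ℕ) : ZMod p) * (((2*n+1 : ℕ) : ZMod p) * (((2*n).choose n : ℕ) : ZMod p)) := by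
            rw [← hBc]
        _ = _ := by ring
    rw [e1, ihn]
    have e2 : (-4:ZMod p) ^ (n+1) * ((m.choose (n+1) : ℕ) : ZMod p) * ((n+1:ℕ):ZMod p)
          * ((n+1:ℕ):ZMod p)
        = (-4:ZMod p) ^ (n+1) * (((m.choose n : ℕ) : ZMod p)
          * (((m:ℕ) : ZMod p) - ((n:ℕ) : ZMod p))) * ((n+1:ℕ):ZMod p) := by
      rw [mul_assoc ((-4:ZMod p) ^ (n+1)), mul_assoc, hDc]; ring
    rw [e2]
    push_cast
    linear_combination (2 * (-4:ZMod p)^n * ((m.choose n : ℕ) : ZMod p) * (((n:ℕ):ZMod p)+1)) * hM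

section Poly
variable {R : Type*} [CommRing R]

lemma coeff_Xsq_add_pow (b : R) (m k : ℕ) :
    ((X ^ 2 + C b) ^ m).coeff k
      = if k % 2 = 0 ∧ k / 2 ≤ m then (m.choose (k/2) : R) * b ^ (m - k/2) else 0 := by
  rw [add_pow, finset_sum_coeff]
  have hterm : ∀ j, (((X:R[X]) ^ 2) ^ j * C b ^ (m - j) * (m.choose j : R[X])).coeff k
      = if k = 2*j then b ^ (m-j) * (m.choose j : R) else 0 := by
    intro j
    have : ((X:R[X]) ^ 2) ^ j * C b ^ (m - j) * (m.choose j : R[X])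
        = C (b ^ (m-j) * (m.choose j : R)) * X ^ (2*j) := by
      rw [← pow_mul, ← C_pow, map_mul, ← C_eq_natCast]
      ring
    rw [this, coeff_C_mul, coeff_X_pow, mul_ite, mul_one, mul_zero]
  rw [Finset.sum_congr rfl fun j _ => hterm j]
  by_cases hk : k % 2 = 0 ∧ k / 2 ≤ m
  · rw [if_pos hk, Finset.sum_eq_single (k/2)]
    · rw [if_pos (by omega), mul_comm]
    · intro j _ hj; rw [if_neg (by omega)]
    · intro h; exact absurd (Finset.mem_range.2 (by omega)) h
  · rw [if_neg hk]
    refine Finset.sum_eq_zero fun j hj => ?_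
    rw [Finset.mem_range] at hj
    rw [if_neg (by omega)]

lemma coeff_trinomial_pow (a b : R) (n : ℕ) :
    ((X ^ 2 + C a * X + C b) ^ n).coeff n
      = ∑ i ∈ (Finset.range (n + 1)).filter (fun i => i % 2 = n % 2),
          (n.choose i : R) * ((n - i).choose ((n - i) / 2) : R) * a ^ i * b ^ ((n - i) / 2) := by
  have expand : (X ^ 2 + C a * X + C b : R[X]) ^ n
      = ∑ i ∈ Finset.range (n+1),
          C (a ^ i * (n.choose i : R)) * X ^ i * (X ^ 2 + C b) ^ (n - i) := by
    rw [show (X ^ 2 + C a * X + C b : R[X]) = C a * X + (X ^ 2 + C b) by ring, add_pow]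
    refine Finset.sum_congr rfl fun i _ => ?_
    rw [mul_pow, ← C_pow, map_mul, ← C_eq_natCast]
    ring
  rw [expand, finset_sum_coeff]
  have hterm : ∀ i ∈ Finset.range (n+1),
      (C (a ^ i * (n.choose i : R)) * X ^ i * (X ^ 2 + C b) ^ (n - i)).coeff n
      = if (n - i) % 2 = 0 then
          (n.choose i : R) * ((n - i).choose ((n - i) / 2) : R) * a ^ i * b ^ ((n - i) / 2)
        else 0 := by
    intro i hi
    rw [Finset.mem_range] at hi
    rw [mul_assoc, mul_comm ((X:R[X])^i), ← mul_assoc,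
      show n = (n - i) + i by omega, coeff_mul_X_pow, coeff_C_mul, coeff_Xsq_add_pow,
      show n - i + i - i = n - i from by omega, show n - i + i = n from by omega]
    have hle : (n - i) / 2 ≤ n - i := Nat.div_le_self _ _
    by_cases h2 : (n - i) % 2 = 0
    · rw [if_pos ⟨h2, hle⟩, if_pos h2, show n - i - (n-i)/2 = (n-i)/2 by omega]
      ring
    · rw [if_neg (by tauto), if_neg h2, mul_zero]
  rw [Finset.sum_congr rfl hterm, Finset.sum_ite, Finset.sum_const_zero, add_zero,
    Finset.sum_filter, Finset.sum_filter]
  refine Finset.sum_congr rfl fun i hi => ?_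
  rw [Finset.mem_range] at hi
  congr 1
  simp only [eq_iff_iff]
  omega

end Poly

lemma sCoef_eq_coeff (p r : ℕ) (u α : ZMod p) :
    sCoef p r u α = (((X - C u) ^ 2 - C α) ^ r).coeff r := by
  have hpoly : ((X - C u) ^ 2 - C α : (ZMod p)[X])
      = X ^ 2 + C (-(2*u)) * X + C (u^2 - α) := by
    simp only [map_neg, map_mul, map_sub, map_pow, map_ofNat, map_add]
    ring
  rw [hpoly, coeff_trinomial_pow, sCoef, Finset.mul_sum]
  refine Finset.sum_congr rfl fun i hi => ?_
  simp only [Finset.mem_filter, Finset.mem_range] at hi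
  have hpar : (-1 : ZMod p) ^ r = (-1 : ZMod p) ^ i := by
    rw [neg_one_pow_eq_pow_mod_two, neg_one_pow_eq_pow_mod_two (n := i), hi.2]
  have h1 : (-(2*u)) ^ i = (-1 : ZMod p) ^ i * (2*u) ^ i := by rw [neg_pow]
  have h2 : (u^2 - α) ^ ((r-i)/2) = (-1 : ZMod p) ^ ((r-i)/2) * (α - u^2) ^ ((r-i)/2) := by
    rw [show u^2 - α = -(α - u^2) by ring, neg_pow]
  rw [h1, h2, hpar]
  ring

lemma trinom_ne_zero {R : Type*} [CommRing R] [Nontrivial R] (a b : R) :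
    (X ^ 2 + C a * X + C b : R[X]) ≠ 0 := by
  intro h
  have h2 := congrArg (fun q : R[X] => q.coeff 2) h
  simpa [coeff_X, coeff_C] using h2

/-- For an odd prime `p` and all `u, α ∈ F_p`,
`Σ_{r=0}^{p-1} s_r(u,α) = (4u + 4α + 1)^{(p-1)/2}` in `F_p`. -/
theorem sum_sCoef_eq (p : ℕ) [Fact p.Prime] (hodd : Odd p) (u α : ZMod p) :
    ∑ r ∈ Finset.range p, sCoef p r u α = (4 * u + 4 * α + 1) ^ ((p - 1) / 2) := by
  have hp := (Fact.out : p.Prime).two_le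
  have hp3 : 3 ≤ p := by obtain ⟨k, hk⟩ := hodd; omega
  have hfg : ((X - C u) ^ 2 - C α : (ZMod p)[X]) - X
      = X ^ 2 + C (-(2*u+1)) * X + C (u^2 - α) := by
    simp only [map_neg, map_mul, map_sub, map_pow, map_add, map_one, map_ofNat]
    ring
  have hsum : (∑ r ∈ Finset.range p, ((X - C u) ^ 2 - C α : (ZMod p)[X]) ^ r * X ^ (p - 1 - r))
      = (X ^ 2 + C (-(2*u+1)) * X + C (u^2 - α)) ^ (p - 1) := by
    apply mul_right_cancel₀ (trinom_ne_zero (-(2*u+1)) (u^2 - α))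
    rw [← hfg, geom_sum₂_mul, ← pow_succ, show p - 1 + 1 = p by omega]
    exact (sub_pow_char _ _).symm
  have hstep1 : ∑ r ∈ Finset.range p, sCoef p r u α
      = ((X ^ 2 + C (-(2*u+1)) * X + C (u^2 - α) : (ZMod p)[X]) ^ (p-1)).coeff (p-1) := by
    rw [← hsum, finset_sum_coeff]
    refine Finset.sum_congr rfl fun r hr => ?_
    rw [Finset.mem_range] at hr
    rw [sCoef_eq_coeff, coeff_mul_X_pow', if_pos (by omega : p - 1 - r ≤ p - 1),
      show p - 1 - (p - 1 - r) = r by omega]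
  rw [hstep1, coeff_trinomial_pow]
  set m := (p - 1) / 2 with hm
  have h2m : 2 * m = p - 1 := by obtain ⟨k, hk⟩ := hodd; omega
  have hreindex :
      ∑ i ∈ (Finset.range ((p-1) + 1)).filter (fun i => i % 2 = (p-1) % 2),
          ((p-1).choose i : ZMod p) * (((p-1) - i).choose (((p-1) - i) / 2) : ZMod p)
            * (-(2*u+1)) ^ i * (u^2 - α) ^ (((p-1) - i) / 2)
      = ∑ j ∈ Finset.range (m + 1),
          ((p-1).choose (2*j) : ZMod p) * ((2*(m-j)).choose (m-j) : ZMod p)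
            * (-(2*u+1)) ^ (2*j) * (u^2 - α) ^ (m-j) := by
    refine Finset.sum_nbij' (fun i => i / 2) (fun j => 2 * j) ?_ ?_ ?_ ?_ ?_
    · intro a ha
      simp only [Finset.mem_filter, Finset.mem_range] at ha
      exact Finset.mem_range.2 (by omega)
    · intro a ha
      rw [Finset.mem_range] at ha
      simp only [Finset.mem_filter, Finset.mem_range]
      omega
    · intro a ha
      simp only [Finset.mem_filter, Finset.mem_range] at ha
      omega
    · intro a ha; omega
    · intro a ha
      simp only [Finset.mem_filter, Finset.mem_range] at ha
      have e1 : 2 * (a / 2) = a := by omega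
      have e2 : p - 1 - a = 2 * (m - a / 2) := by omega
      have e3 : (p - 1 - a) / 2 = m - a / 2 := by omega
      rw [e3, e2, e1]
  rw [hreindex]
  have hterm : ∀ j ∈ Finset.range (m+1),
      ((p-1).choose (2*j) : ZMod p) * ((2*(m-j)).choose (m-j) : ZMod p)
        * (-(2*u+1)) ^ (2*j) * (u^2 - α) ^ (m-j)
      = ((2*u+1)^2) ^ j * (4*α - 4*u^2) ^ (m-j) * (m.choose j : ZMod p) := by
    intro j hj
    rw [Finset.mem_range] at hj
    rw [choose_p_sub_one p (by omega), central_binom_eq p hodd (by omega : m - j ≤ m), ← hm,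
      Nat.choose_symm (by omega : j ≤ m)]
    have hs1 : ((-1 : ZMod p)) ^ (2*j) = 1 := by
      rw [pow_mul]; norm_num
    have hs2 : (-(2*u+1) : ZMod p) ^ (2*j) = ((2*u+1)^2) ^ j := by
      rw [pow_mul, neg_pow]; norm_num
    rw [hs1, hs2, show (4*α - 4*u^2 : ZMod p) = (-4) * (u^2 - α) by ring, mul_pow]
    ring
  rw [Finset.sum_congr rfl hterm, ← add_pow]
  congr 1
  ring
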